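/- arXiv:2507.09920 — 3 statements merged into one kernel-verified Lean document; each statement's English description precedes it below -/
import Mathlib

section
/- Let n ≥ 1, 2 < p ≤ q, s, t ∈ (0,1) with tq ≤ sp, and κ ∈ [0, min{sp/(p−2), 1}). Let 1 ≤ ρ₁ < ρ₂ ≤ 2, set ρ̃ = (ρ₂−ρ₁)/4, let m ≥ 3 be an integer, and let m₁, H, M > 0. Let ξ : B̄₂ × ℝⁿ → [0, M] be measurable. Let u : ℝⁿ → ℝ satisfy |u(x) − u(y)| ≤ H|x−y|^κ for all x, y ∈ B_{ρ₂}. Let x̄ ∈ B_{(ρ₁+ρ₂)/2} and ȳ ∈ B_{(3ρ₂+ρ₁)/4} with ā := x̄ − ȳ ≠ 0, and assume: (i) u(x̄+z) − u(ȳ+z) − m₁ψ(x̄+z) ≤ u(x̄) − u(ȳ) − m₁ψ(x̄) for every z ∈ ℝⁿ; (ii) m₁ψ(x̄) ≤ u(x̄) − u(ȳ). Let δ̃₀ ∈ (0, 1/2), δ̃ = δ̃₀|ā|, and θ ∈ (0,1) with δ̃ < |ā|^θ < ρ̃. Then there exists a constant C, depending only on n, p, q, s, t, κ, H, M, m and m₁,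 such that ∫_{B_ρ̃ \ B_δ̃} [J_q(u(x̄) − u(x̄+z)) − J_q(u(ȳ) − u(ȳ+z))] ξ(x̄, z) |z|^{−n−tq} dz ≥ −C [ ∫_{δ̃}^{|ā|^θ} r^{κ(q−2)+1−tq} dr + |ā|^{κ(m−1)/m} ∫_{δ̃}^{|ā|^θ} r^{κ(q−2)−tq} dr + |ā|^{κ + θ(κ(p−2)−sp)} ]. -/
open Metric MeasureTheory
open Filter Set

/-- For `q > 1`, `J_q(t) = |t|^{q-2} t`, with the convention `J_q(0) = 0`. -/
noncomputable def Jq (q t : ℝ) : ℝ := |t| ^ (q - 2) * t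

/-- The localization function `ψ(x) = ((|x|² − ρ₁²)₊)^m`. -/
noncomputable def psiFun (n : ℕ) (ρ₁ : ℝ) (m : ℕ) (x : EuclideanSpace ℝ (Fin n)) : ℝ :=
  (max (‖x‖ ^ 2 - ρ₁ ^ 2) 0) ^ m



lemma hasDerivAt_Jq {q : ℝ} (hq : 2 < q) (t : ℝ) :
    HasDerivAt (Jq q) ((q - 1) * |t| ^ (q - 2)) t := by
  rcases eq_or_ne t 0 with rfl | ht
  · have h0 : |(0:ℝ)| ^ (q - 2) = 0 := by
      rw [abs_zero, Real.zero_rpow (by linarith)]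
    rw [h0, mul_zero, hasDerivAt_iff_tendsto_slope]
    have hcont : ContinuousAt (fun x : ℝ => |x| ^ (q - 2)) 0 := by
      have : ContinuousAt (fun y : ℝ => y ^ (q - 2)) |0| := by
        simp only [abs_zero]
        exact (Real.continuousAt_rpow_const 0 (q-2) (Or.inr (by linarith)))
      exact this.comp (continuous_abs.continuousAt)
    have h2 : Tendsto (fun x : ℝ => |x| ^ (q - 2)) (nhdsWithin 0 {0}ᶜ) (nhds 0) := by
      have := hcont.tendsto
      rw [h0] at this
      exact this.mono_left nhdsWithin_le_nhds
    refine h2.congr' ?_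
    filter_upwards [self_mem_nhdsWithin] with x hx
    have hx' : x ≠ 0 := hx
    simp only [slope_def_field, Jq, abs_zero, Real.zero_rpow (show q-2 ≠ 0 by linarith),
      zero_mul, sub_zero]
    field_simp
  · have habs : HasDerivAt (fun x : ℝ => |x|) (SignType.sign t : ℝ) t := hasDerivAt_abs ht
    have hpow : HasDerivAt (fun x : ℝ => |x| ^ (q - 2))
        ((SignType.sign t : ℝ) * ((q-2) * |t| ^ (q - 2 - 1))) t := by
      have := habs.rpow_const (p := q - 2) (Or.inl (abs_ne_zero.2 ht))
      convert this using 1; ring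
    have := hpow.mul (hasDerivAt_id t)
    have heq : (SignType.sign t : ℝ) * ((q-2) * |t| ^ (q - 2 - 1)) * t + |t| ^ (q-2) * 1
        = (q - 1) * |t| ^ (q - 2) := by
      have hst : (SignType.sign t : ℝ) * t = |t| := by
        rcases lt_or_gt_of_ne ht with h | h
        · simp [sign_neg h, abs_of_neg h]
        · simp [sign_pos h, abs_of_pos h]
      have habs' : |t| ^ (q - 2 - 1) * |t| = |t| ^ (q - 2) := by
        rw [← Real.rpow_add_one (abs_ne_zero.2 ht)]; ring_nf
      calc (SignType.sign t : ℝ) * ((q-2) * |t| ^ (q - 2 - 1)) * t + |t| ^ (q-2) * 1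
          = (q-2) * (|t| ^ (q-2-1) * ((SignType.sign t : ℝ) * t)) + |t| ^ (q-2) := by ring
        _ = (q-2) * (|t| ^ (q-2-1) * |t|) + |t| ^ (q-2) := by rw [hst]
        _ = (q - 1) * |t| ^ (q - 2) := by rw [habs']; ring
    simp only [id] at this
    rw [heq] at this
    exact this


lemma Jq_mono {q : ℝ} (hq : 2 < q) : Monotone (Jq q) := by
  apply monotone_of_deriv_nonneg
  · exact fun t => (hasDerivAt_Jq hq t).differentiableAt
  · intro t
    rw [(hasDerivAt_Jq hq t).deriv]
    exact mul_nonneg (by linarith) (Real.rpow_nonneg (abs_nonneg t) _)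

lemma Jq_sub_le {q : ℝ} (hq : 2 < q) {a b K d : ℝ} (ha : |a| ≤ K) (hb : |b| ≤ K)
    (hd : 0 ≤ d) (hba : b - a ≤ d) :
    Jq q b - Jq q a ≤ (q - 1) * K ^ (q - 2) * d := by
  have hK : 0 ≤ K := le_trans (abs_nonneg a) ha
  rcases le_or_gt b a with h | h
  · have := Jq_mono hq h
    have hpos : 0 ≤ (q - 1) * K ^ (q - 2) * d :=
      mul_nonneg (mul_nonneg (by linarith) (Real.rpow_nonneg hK _)) hd
    linarith
  · -- mean value on [a, b]
    have hder : ∀ x ∈ Set.Icc a b, HasDerivWithinAt (Jq q) ((q-1) * |x| ^ (q-2)) (Set.Icc a b) x :=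
      fun x _ => (hasDerivAt_Jq hq x).hasDerivWithinAt
    have hbound : ∀ x ∈ Set.Icc a b, ‖(q-1) * |x| ^ (q-2)‖ ≤ (q-1) * K ^ (q-2) := by
      intro x hx
      have hxK : |x| ≤ K := by
        rw [abs_le]; rw [abs_le] at ha hb
        exact ⟨by linarith [hx.1], by linarith [hx.2]⟩
      rw [Real.norm_eq_abs, abs_mul, abs_of_nonneg (by linarith : (0:ℝ) ≤ q - 1),
        abs_of_nonneg (Real.rpow_nonneg (abs_nonneg x) _)]
      exact mul_le_mul_of_nonneg_left (Real.rpow_le_rpow (abs_nonneg x) hxK (by linarith))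
        (by linarith)
    have := (convex_Icc a b).norm_image_sub_le_of_norm_hasDerivWithin_le hder hbound
      (Set.left_mem_Icc.2 h.le) (Set.right_mem_Icc.2 h.le)
    rw [Real.norm_eq_abs, Real.norm_eq_abs] at this
    have h1 : Jq q b - Jq q a ≤ (q-1) * K ^ (q-2) * |b - a| := le_trans (le_abs_self _) this
    have h2 : |b - a| = b - a := abs_of_pos (by linarith)
    rw [h2] at h1
    calc Jq q b - Jq q a ≤ (q-1) * K ^ (q-2) * (b - a) := h1
      _ ≤ (q - 1) * K ^ (q - 2) * d := by
          exact mul_le_mul_of_nonneg_left hba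
            (mul_nonneg (by linarith) (Real.rpow_nonneg hK _))


lemma pow_interp {A B : ℝ} (hA : 0 ≤ A) (hB : 0 ≤ B) {m k : ℕ} (hk1 : 1 ≤ k) (hkm : k ≤ m) :
    A ^ (m - k) * B ^ k ≤ A ^ (m - 1) * B + B ^ m := by
  rcases le_or_gt B A with h | h
  · have h1 : A ^ (m - k) * B ^ k = (A ^ (m - k) * B ^ (k - 1)) * B := by
      rw [mul_assoc, ← pow_succ]
      congr 2
      omega
    have h2 : A ^ (m - k) * B ^ (k - 1) ≤ A ^ (m - k) * A ^ (k - 1) :=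
      mul_le_mul_of_nonneg_left (pow_le_pow_left₀ hB h _) (pow_nonneg hA _)
    have h3 : A ^ (m - k) * A ^ (k - 1) = A ^ (m - 1) := by
      rw [← pow_add]; congr 1; omega
    nlinarith [pow_nonneg hB m, mul_le_mul_of_nonneg_right (h3 ▸ h2) hB]
  · have h1 : A ^ (m - k) ≤ B ^ (m - k) := pow_le_pow_left₀ hA h.le _
    have h2 : A ^ (m - k) * B ^ k ≤ B ^ (m - k) * B ^ k :=
      mul_le_mul_of_nonneg_right h1 (pow_nonneg hB _)
    have h3 : B ^ (m - k) * B ^ k = B ^ m := by rw [← pow_add]; congr 1; omega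
    have h4 : 0 ≤ A ^ (m-1) * B := mul_nonneg (pow_nonneg hA _) hB
    nlinarith
lemma add_pow_le_interp {A B : ℝ} (hA : 0 ≤ A) (hB : 0 ≤ B) {m : ℕ} (hm : 1 ≤ m) :
    (A + B) ^ m ≤ A ^ m + (m : ℝ) * (m:ℝ)^m * (A ^ (m-1) * B + B ^ m) := by
  rw [add_pow]
  rw [Finset.sum_range_succ]
  simp only [Nat.choose_self, Nat.cast_one, mul_one, Nat.sub_self, pow_zero, one_mul]
  have hbound : ∀ k ∈ Finset.range m,
      A ^ k * B ^ (m - k) * (m.choose k : ℝ) ≤ (m:ℝ)^m * (A ^ (m-1) * B + B ^ m) := by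
    intro k hk
    rw [Finset.mem_range] at hk
    have h1 : A ^ k * B ^ (m - k) ≤ A ^ (m-1) * B + B ^ m := by
      have := pow_interp hA hB (k := m - k) (m := m) (by omega) (by omega)
      have hmk : m - (m - k) = k := by omega
      rwa [hmk] at this
    have h2 : (m.choose k : ℝ) ≤ (m:ℝ)^m := by
      have := Nat.choose_le_pow m k
      calc (m.choose k : ℝ) ≤ ((m^k : ℕ) : ℝ) := by exact_mod_cast this
        _ ≤ ((m^m : ℕ) : ℝ) := by exact_mod_cast Nat.pow_le_pow_right (by omega) (by omega)
        _ = (m:ℝ)^m := by push_cast; ring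
    calc A ^ k * B ^ (m - k) * (m.choose k : ℝ) ≤ (A ^ (m-1) * B + B ^ m) * (m:ℝ)^m := by
          apply mul_le_mul h1 h2 (by positivity)
          nlinarith [mul_nonneg (pow_nonneg hA (m-1)) hB, pow_nonneg hB m]
      _ = (m:ℝ)^m * (A ^ (m-1) * B + B ^ m) := by ring
  have hsum := Finset.sum_le_sum hbound
  rw [Finset.sum_const, Finset.card_range, nsmul_eq_mul] at hsum
  linarith

lemma g_lip {n : ℕ} (ρ₁ : ℝ) (x z : EuclideanSpace ℝ (Fin n))
    (hx : ‖x‖ ≤ 2) (hxz : ‖x + z‖ ≤ 2) :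
    max (‖x + z‖ ^ 2 - ρ₁ ^ 2) 0 ≤ max (‖x‖ ^ 2 - ρ₁ ^ 2) 0 + 4 * ‖z‖ := by
  have h1 : ‖x + z‖ - ‖x‖ ≤ ‖z‖ := by
    have := norm_sub_norm_le (x + z) x
    simpa using this
  have h0 : (0:ℝ) ≤ ‖x‖ := norm_nonneg x
  have h0' : (0:ℝ) ≤ ‖x+z‖ := norm_nonneg _
  have h2 : ‖x + z‖ ^ 2 ≤ ‖x‖ ^ 2 + 4 * ‖z‖ := by nlinarith [norm_nonneg z]
  have h3 : (0:ℝ) ≤ 4 * ‖z‖ := by positivity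
  rcases le_total (‖x + z‖ ^ 2 - ρ₁ ^ 2) 0 with h | h
  · rw [max_eq_right h]
    have := le_max_right (‖x‖ ^ 2 - ρ₁ ^ 2) 0
    linarith
  · rw [max_eq_left h]
    have := le_max_left (‖x‖ ^ 2 - ρ₁ ^ 2) 0
    linarith

lemma psi_growth {n : ℕ} (ρ₁ : ℝ) {m : ℕ} (hm : 1 ≤ m) (x z : EuclideanSpace ℝ (Fin n))
    (hx : ‖x‖ ≤ 2) (hxz : ‖x + z‖ ≤ 2) :
    psiFun n ρ₁ m (x + z) - psiFun n ρ₁ m x ≤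
      (m:ℝ) * (m:ℝ)^m * 4^m *
        ((max (‖x‖^2 - ρ₁^2) 0) ^ (m-1) * ‖z‖ + ‖z‖ ^ m) := by
  set a := max (‖x‖^2 - ρ₁^2) 0 with ha
  have ha0 : 0 ≤ a := le_max_right _ _
  have hr0 : (0:ℝ) ≤ ‖z‖ := norm_nonneg z
  have h4r : (0:ℝ) ≤ 4 * ‖z‖ := by positivity
  have step1 : psiFun n ρ₁ m (x + z) ≤ (a + 4 * ‖z‖) ^ m := by
    rw [psiFun]
    exact pow_le_pow_left₀ (le_max_right _ _) (g_lip ρ₁ x z hx hxz) m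
  have step2 : (a + 4 * ‖z‖) ^ m ≤ a ^ m + (m:ℝ) * (m:ℝ)^m *
      (a ^ (m-1) * (4 * ‖z‖) + (4 * ‖z‖) ^ m) := add_pow_le_interp ha0 h4r hm
  have hpsix : psiFun n ρ₁ m x = a ^ m := rfl
  have step3 : a ^ (m-1) * (4 * ‖z‖) + (4 * ‖z‖) ^ m ≤
      4^m * (a ^ (m-1) * ‖z‖ + ‖z‖ ^ m) := by
    have h4m : (4:ℝ) ≤ 4 ^ m := by
      calc (4:ℝ) = 4^1 := by norm_num
        _ ≤ 4^m := pow_le_pow_right₀ (by norm_num) hm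
    have e1 : (4 * ‖z‖)^m = 4^m * ‖z‖^m := by rw [mul_pow]
    have e2 : a ^ (m-1) * (4 * ‖z‖) = 4 * (a ^ (m-1) * ‖z‖) := by ring
    rw [e1, e2]
    have hkey : 4 * (a ^ (m-1) * ‖z‖) ≤ 4^m * (a ^ (m-1) * ‖z‖) :=
      mul_le_mul_of_nonneg_right h4m (mul_nonneg (pow_nonneg ha0 (m-1)) hr0)
    nlinarith [pow_nonneg hr0 m]
  have hc : (0:ℝ) ≤ (m:ℝ) * (m:ℝ)^m := by positivity
  calc psiFun n ρ₁ m (x + z) - psiFun n ρ₁ m x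
      ≤ (a + 4 * ‖z‖) ^ m - a ^ m := by rw [hpsix]; linarith
    _ ≤ (m:ℝ) * (m:ℝ)^m * (a ^ (m-1) * (4 * ‖z‖) + (4 * ‖z‖) ^ m) := by linarith
    _ ≤ (m:ℝ) * (m:ℝ)^m * (4^m * (a ^ (m-1) * ‖z‖ + ‖z‖ ^ m)) :=
        mul_le_mul_of_nonneg_left step3 hc
    _ = (m:ℝ) * (m:ℝ)^m * 4^m * ((max (‖x‖^2 - ρ₁^2) 0) ^ (m-1) * ‖z‖ + ‖z‖ ^ m) := by
        rw [← ha]; ring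

lemma pow_sub_one_le_rpow {a c : ℝ} (ha : 0 ≤ a) (hc : 0 ≤ c) {m : ℕ} (hm : 1 ≤ m)
    (h : a ^ m ≤ c) : a ^ (m - 1) ≤ c ^ (((m:ℝ) - 1) / m) := by
  have hm0 : (0:ℝ) < m := by exact_mod_cast hm
  have h1 : a ≤ c ^ (1 / (m:ℝ)) := by
    have h2 : (a ^ m : ℝ) ^ (1 / (m:ℝ)) ≤ c ^ (1 / (m:ℝ)) :=
      Real.rpow_le_rpow (pow_nonneg ha m) h (by positivity)
    rwa [← Real.rpow_natCast a m, ← Real.rpow_mul ha, mul_one_div,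
      div_self (ne_of_gt hm0), Real.rpow_one] at h2
  calc a ^ (m - 1) ≤ (c ^ (1 / (m:ℝ))) ^ (m - 1) :=
        pow_le_pow_left₀ ha h1 _
    _ = c ^ (((m:ℝ) - 1) / m) := by
        rw [← Real.rpow_natCast (c ^ (1 / (m:ℝ))) (m-1), ← Real.rpow_mul hc]
        congr 1
        rw [Nat.cast_sub hm]
        push_cast
        ring

lemma annulus_radial_eq (n : ℕ) (hn : 1 ≤ n) (Φ : ℝ → ℝ) {a b : ℝ} (ha : 0 < a) (hab : a ≤ b) :
    ∫ z in ball (0 : EuclideanSpace ℝ (Fin n)) b \ ball 0 a, Φ ‖z‖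
      = (n * (volume (ball (0 : EuclideanSpace ℝ (Fin n)) 1)).toReal) *
          ∫ y in a..b, y ^ (n - 1) * Φ y := by
  haveI : Nontrivial (EuclideanSpace ℝ (Fin n)) := by
    refine ⟨EuclideanSpace.single (⟨0, hn⟩ : Fin n) (1:ℝ), 0, ?_⟩
    intro h
    have := congrArg (fun v => v ⟨0, hn⟩) h
    simp [EuclideanSpace.single] at this
  set E := EuclideanSpace ℝ (Fin n)
  set S : Set E := ball 0 b \ ball 0 a with hS
  have hdim : Module.finrank ℝ E = n := by
    simp [E, finrank_euclideanSpace]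
  have hSmeas : MeasurableSet S := (measurableSet_ball).diff measurableSet_ball
  have hind : ∀ z : E, S.indicator (fun z => Φ ‖z‖) z = (Ico a b).indicator Φ ‖z‖ := by
    intro z
    by_cases hz : z ∈ S
    · rw [indicator_of_mem hz]
      have hz' : ‖z‖ ∈ Ico a b := by
        obtain ⟨h1, h2⟩ := hz
        rw [mem_ball_zero_iff] at h1
        exact ⟨by simpa [mem_ball_zero_iff, not_lt] using h2, h1⟩
      rw [indicator_of_mem hz']
    · rw [indicator_of_notMem hz]
      have hz' : ‖z‖ ∉ Ico a b := by
        intro hmem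
        exact hz ⟨by simpa [mem_ball_zero_iff] using hmem.2,
          by simpa [mem_ball_zero_iff, not_lt] using hmem.1⟩
      rw [indicator_of_notMem hz']
  calc ∫ z in S, Φ ‖z‖
      = ∫ z : E, S.indicator (fun z => Φ ‖z‖) z := (integral_indicator hSmeas).symm
    _ = ∫ z : E, (fun r => (Ico a b).indicator Φ r) ‖z‖ := by
        simp only [hind]
    _ = Module.finrank ℝ E • (volume (ball (0:E) 1)).toReal •
          ∫ y in Ioi (0:ℝ), y ^ (Module.finrank ℝ E - 1) • (Ico a b).indicator Φ y :=
        integral_fun_norm_addHaar volume _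
    _ = (n * (volume (ball (0:E) 1)).toReal) * ∫ y in a..b, y ^ (n - 1) * Φ y := by
        rw [hdim]
        have h1 : ∫ y in Ioi (0:ℝ), y ^ (n - 1) • (Ico a b).indicator Φ y
            = ∫ y in a..b, y ^ (n - 1) * Φ y := by
          have h2 : ∀ y : ℝ, y ^ (n-1) • (Ico a b).indicator Φ y
              = (Ico a b).indicator (fun y => y ^ (n-1) * Φ y) y := by
            intro y
            by_cases hy : y ∈ Ico a b
            · rw [indicator_of_mem hy, indicator_of_mem hy, smul_eq_mul]
            · rw [indicator_of_notMem hy, indicator_of_notMem hy, smul_zero]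
          simp only [h2]
          rw [integral_indicator measurableSet_Ico]
          rw [Measure.restrict_restrict measurableSet_Ico]
          have hinter : Ico a b ∩ Ioi 0 = Ico a b := by
            apply inter_eq_left.2
            intro y hy
            exact lt_of_lt_of_le ha hy.1
          rw [hinter, intervalIntegral.integral_of_le hab,
            integral_Ico_eq_integral_Ioo, integral_Ioc_eq_integral_Ioo]
        rw [h1, nsmul_eq_mul, smul_eq_mul]
        ring

set_option maxHeartbeats 2000000 in
theorem stmt_15 (n : ℕ) (hn : 1 ≤ n) (p q s t κ : ℝ) (hp : 2 < p) (hpq : p ≤ q)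
    (hs0 : 0 < s) (hs1 : s < 1) (ht0 : 0 < t) (ht1 : t < 1) (htq : t * q ≤ s * p)
    (hκ0 : 0 ≤ κ) (hκ1 : κ < min (s * p / (p - 2)) 1)
    (m : ℕ) (hm : 3 ≤ m) (m₁ H M : ℝ) (hm₁ : 0 < m₁) (hH : 0 < H) (hM : 0 < M) :
    ∃ C : ℝ, 0 < C ∧
      ∀ ρ₁ ρ₂ : ℝ, 1 ≤ ρ₁ → ρ₁ < ρ₂ → ρ₂ ≤ 2 →
      ∀ ξ : EuclideanSpace ℝ (Fin n) → EuclideanSpace ℝ (Fin n) → ℝ,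
        Measurable (fun zw : EuclideanSpace ℝ (Fin n) × EuclideanSpace ℝ (Fin n) =>
          ξ zw.1 zw.2) →
        (∀ x ∈ closedBall (0 : EuclideanSpace ℝ (Fin n)) 2,
          ∀ z : EuclideanSpace ℝ (Fin n), ξ x z ∈ Set.Icc 0 M) →
      ∀ u : EuclideanSpace ℝ (Fin n) → ℝ,
        (∀ x ∈ ball (0 : EuclideanSpace ℝ (Fin n)) ρ₂,
          ∀ y ∈ ball (0 : EuclideanSpace ℝ (Fin n)) ρ₂,
            |u x - u y| ≤ H * ‖x - y‖ ^ κ) →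
      ∀ xb ∈ ball (0 : EuclideanSpace ℝ (Fin n)) ((ρ₁ + ρ₂) / 2),
      ∀ yb ∈ ball (0 : EuclideanSpace ℝ (Fin n)) ((3 * ρ₂ + ρ₁) / 4),
        xb - yb ≠ 0 →
        (∀ z : EuclideanSpace ℝ (Fin n),
          u (xb + z) - u (yb + z) - m₁ * psiFun n ρ₁ m (xb + z)
            ≤ u xb - u yb - m₁ * psiFun n ρ₁ m xb) →
        m₁ * psiFun n ρ₁ m xb ≤ u xb - u yb →
      ∀ δt₀ θ : ℝ, 0 < δt₀ → δt₀ < 1 / 2 → 0 < θ → θ < 1 →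
        δt₀ * ‖xb - yb‖ < ‖xb - yb‖ ^ θ → ‖xb - yb‖ ^ θ < (ρ₂ - ρ₁) / 4 →
        -C * ((∫ r in (δt₀ * ‖xb - yb‖)..(‖xb - yb‖ ^ θ), r ^ (κ * (q - 2) + 1 - t * q))
            + ‖xb - yb‖ ^ (κ * ((m : ℝ) - 1) / m)
              * (∫ r in (δt₀ * ‖xb - yb‖)..(‖xb - yb‖ ^ θ), r ^ (κ * (q - 2) - t * q))
            + ‖xb - yb‖ ^ (κ + θ * (κ * (p - 2) - s * p)))
          ≤ ∫ z in (ball (0 : EuclideanSpace ℝ (Fin n)) ((ρ₂ - ρ₁) / 4)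
                \ ball 0 (δt₀ * ‖xb - yb‖)),
              (Jq q (u xb - u (xb + z)) - Jq q (u yb - u (yb + z)))
                * ξ xb z * ‖z‖ ^ (-(n : ℝ) - t * q) := by
  have hq2 : 2 < q := lt_of_lt_of_le hp hpq
  have hq1 : (0:ℝ) < q - 1 := by linarith
  have hp2 : (0:ℝ) < p - 2 := by linarith
  set e : ℝ := κ * (p - 2) - s * p with he_def
  have he : e < 0 := by
    have hκsp : κ < s * p / (p - 2) := lt_of_lt_of_le hκ1 (min_le_left _ _)
    have h1 : κ * (p - 2) < s * p := by
      calc κ * (p - 2) < (s * p / (p - 2)) * (p - 2) := mul_lt_mul_of_pos_right hκsp hp2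
        _ = s * p := by field_simp
    rw [he_def]; linarith
  set cn : ℝ := (n : ℝ) * (volume (ball (0 : EuclideanSpace ℝ (Fin n)) 1)).toReal
    with hcn_def
  have hcn : 0 < cn := by
    apply mul_pos (by exact_mod_cast hn : (0:ℝ) < (n:ℝ))
    exact ENNReal.toReal_pos (measure_ball_pos volume 0 one_pos).ne'
      (measure_ball_lt_top).ne
  set c₄ : ℝ := (q - 1) * H ^ (q - 2) * M with hc₄_def
  have hc₄ : 0 < c₄ := mul_pos (mul_pos hq1 (Real.rpow_pos_of_pos hH _)) hM
  set Cm : ℝ := (m : ℝ) * (m : ℝ) ^ m * 4 ^ m with hCm_def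
  have hm0 : 0 < (m:ℝ) := by exact_mod_cast (by omega : 0 < m)
  have hCm : 0 < Cm := by positivity
  set CA : ℝ := (H / m₁) ^ (((m : ℝ) - 1) / (m : ℝ)) with hCA_def
  have hCA : 0 < CA := Real.rpow_pos_of_pos (div_pos hH hm₁) _
  set C₁ : ℝ := cn * (c₄ * (m₁ * Cm)) with hC₁_def
  set C₂ : ℝ := C₁ * CA with hC₂_def
  set C₃ : ℝ := cn * (c₄ * (2 * H)) / (-e) with hC₃_def
  have hC₁ : 0 < C₁ := by positivity
  have hC₂ : 0 < C₂ := mul_pos hC₁ hCA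
  have hC₃ : 0 < C₃ := div_pos (by positivity) (by linarith)
  refine ⟨C₁ + C₂ + C₃ + 1, by linarith, ?_⟩
  intro ρ₁ ρ₂ hρ₁ hρ12 hρ₂ ξ hξm hξb u hu xb hxb yb hyb hab hi hii δt₀ θ hδ₀ hδhalf hθ0
    hθ1 hδR hRb
  set d : ℝ := ‖xb - yb‖ with hd_def
  have hd : 0 < d := by rw [hd_def]; exact norm_pos_iff.2 hab
  set aa : ℝ := δt₀ * d with haa_def
  set R : ℝ := d ^ θ with hR_def
  set bb : ℝ := (ρ₂ - ρ₁) / 4 with hbb_def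
  have haa0 : 0 < aa := mul_pos hδ₀ hd
  have hR0 : 0 < R := Real.rpow_pos_of_pos hd θ
  have hbb14 : bb ≤ 1 / 4 := by rw [hbb_def]; linarith
  have hbb0 : 0 < bb := by rw [hbb_def]; linarith
  have haaR : aa < R := hδR
  have hRbb : R < bb := hRb
  have haabb : aa ≤ bb := by linarith
  have hd1 : d < 1 := by
    by_contra hcon
    push_neg at hcon
    have : (1:ℝ) ≤ d ^ θ := Real.one_le_rpow hcon hθ0.le
    have : (1:ℝ) < 1/4 := by calc (1:ℝ) ≤ R := this
                                 _ < bb := hRbb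
                                 _ ≤ 1/4 := hbb14
    linarith
  set T₁ : ℝ := ∫ r in aa..R, r ^ (κ * (q - 2) + 1 - t * q) with hT₁_def
  set T₂ : ℝ := ∫ r in aa..R, r ^ (κ * (q - 2) - t * q) with hT₂_def
  set ν : ℝ := κ * ((m : ℝ) - 1) / (m : ℝ) with hν_def
  set T₃ : ℝ := d ^ (κ + θ * e) with hT₃_def
  have hT₁ : 0 ≤ T₁ := by
    rw [hT₁_def]
    apply intervalIntegral.integral_nonneg haaR.le
    intro x hx
    exact Real.rpow_nonneg (le_trans haa0.le hx.1) _
  have hT₂ : 0 ≤ T₂ := by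
    rw [hT₂_def]
    apply intervalIntegral.integral_nonneg haaR.le
    intro x hx
    exact Real.rpow_nonneg (le_trans haa0.le hx.1) _
  have hT₃ : 0 < T₃ := Real.rpow_pos_of_pos hd _
  have hdν : (0:ℝ) ≤ d ^ ν := (Real.rpow_pos_of_pos hd ν).le
  set S : Set (EuclideanSpace ℝ (Fin n)) := ball 0 bb \ ball 0 aa with hS_def
  have hSmeas : MeasurableSet S := measurableSet_ball.diff measurableSet_ball
  set g₀ : ℝ := max (‖xb‖ ^ 2 - ρ₁ ^ 2) 0 with hg₀_def
  have hg₀ : 0 ≤ g₀ := le_max_right _ _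
  set A : ℝ := g₀ ^ (m - 1) with hA_def
  have hA0 : 0 ≤ A := pow_nonneg hg₀ _
  set D : ℝ → ℝ := fun r => min (2 * H * d ^ κ) (m₁ * (Cm * (A * r + r ^ m))) with hD_def
  set Φ : ℝ → ℝ := fun r => c₄ * (r ^ (κ * (q - 2)) * r ^ (-(n:ℝ) - t * q)) * D r
    with hΦ_def
  set F : EuclideanSpace ℝ (Fin n) → ℝ := fun z =>
    (Jq q (u xb - u (xb + z)) - Jq q (u yb - u (yb + z)))
      * ξ xb z * ‖z‖ ^ (-(n : ℝ) - t * q) with hF_def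
  -- basic memberships
  have hxbn : ‖xb‖ < (ρ₁ + ρ₂) / 2 := mem_ball_zero_iff.1 hxb
  have hybn : ‖yb‖ < (3 * ρ₂ + ρ₁) / 4 := mem_ball_zero_iff.1 hyb
  have hxbρ₂ : xb ∈ ball (0 : EuclideanSpace ℝ (Fin n)) ρ₂ :=
    mem_ball_zero_iff.2 (by linarith)
  have hybρ₂ : yb ∈ ball (0 : EuclideanSpace ℝ (Fin n)) ρ₂ :=
    mem_ball_zero_iff.2 (by linarith)
  have hdκ : |u xb - u yb| ≤ H * d ^ κ := hu xb hxbρ₂ yb hybρ₂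
  -- pointwise bound
  have hpt : ∀ z ∈ S, -(Φ ‖z‖) ≤ F z := by
    intro z hz
    have hz1 : aa ≤ ‖z‖ := by
      have := hz.2
      simpa [mem_ball_zero_iff, not_lt] using this
    have hz2 : ‖z‖ < bb := mem_ball_zero_iff.1 hz.1
    have hz0 : 0 < ‖z‖ := lt_of_lt_of_le haa0 hz1
    have hxzn : ‖xb + z‖ ≤ ‖xb‖ + ‖z‖ := norm_add_le _ _
    have hyzn : ‖yb + z‖ ≤ ‖yb‖ + ‖z‖ := norm_add_le _ _
    have hbbval : bb = (ρ₂ - ρ₁) / 4 := hbb_def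
    have hxzρ₂ : xb + z ∈ ball (0 : EuclideanSpace ℝ (Fin n)) ρ₂ := by
      rw [mem_ball_zero_iff]
      rw [hbbval] at hz2
      linarith
    have hyzρ₂ : yb + z ∈ ball (0 : EuclideanSpace ℝ (Fin n)) ρ₂ := by
      rw [mem_ball_zero_iff]
      rw [hbbval] at hz2
      linarith
    -- Hölder bounds
    have haK : |u xb - u (xb + z)| ≤ H * ‖z‖ ^ κ := by
      have h := hu xb hxbρ₂ (xb + z) hxzρ₂
      have heq : xb - (xb + z) = -z := by abel
      rwa [heq, norm_neg] at h
    have hbK : |u yb - u (yb + z)| ≤ H * ‖z‖ ^ κ := by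
      have h := hu yb hybρ₂ (yb + z) hyzρ₂
      have heq : yb - (yb + z) = -z := by abel
      rwa [heq, norm_neg] at h
    have hdκ2 : |u (xb + z) - u (yb + z)| ≤ H * d ^ κ := by
      have h := hu (xb + z) hxzρ₂ (yb + z) hyzρ₂
      have heq : (xb + z) - (yb + z) = xb - yb := by abel
      rwa [heq, ← hd_def] at h
    have hba1 : (u yb - u (yb + z)) - (u xb - u (xb + z)) ≤ 2 * H * d ^ κ := by
      have h1 := abs_le.1 hdκ
      have h2 := abs_le.1 hdκ2
      linarith [h1.1, h1.2, h2.1, h2.2]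
    have hba2 : (u yb - u (yb + z)) - (u xb - u (xb + z))
        ≤ m₁ * (Cm * (A * ‖z‖ + ‖z‖ ^ m)) := by
      have hpsi := psi_growth ρ₁ (m := m) (by omega) xb z
        (by linarith : ‖xb‖ ≤ 2) (by rw [hbbval] at hz2; linarith : ‖xb + z‖ ≤ 2)
      have hpsi' : psiFun n ρ₁ m (xb + z) - psiFun n ρ₁ m xb
          ≤ Cm * (A * ‖z‖ + ‖z‖ ^ m) := by
        rw [hCm_def, hA_def, hg₀_def]
        exact hpsi
      have hiz := hi z
      have h3 : m₁ * (psiFun n ρ₁ m (xb + z) - psiFun n ρ₁ m xb)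
          ≤ m₁ * (Cm * (A * ‖z‖ + ‖z‖ ^ m)) :=
        mul_le_mul_of_nonneg_left hpsi' hm₁.le
      linarith [hiz]
    have hD0 : 0 ≤ D ‖z‖ := by
      apply le_min
      · positivity
      · have : 0 ≤ A * ‖z‖ + ‖z‖ ^ m := by positivity
        positivity
    have hJ := Jq_sub_le hq2 haK hbK hD0 (le_min hba1 hba2)
    have hKpow : (H * ‖z‖ ^ κ) ^ (q - 2) = H ^ (q - 2) * ‖z‖ ^ (κ * (q - 2)) := by
      rw [Real.mul_rpow hH.le (Real.rpow_nonneg (norm_nonneg z) κ),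
        Real.rpow_mul (norm_nonneg z)]
    rw [hKpow] at hJ
    set Ja := Jq q (u xb - u (xb + z))
    set Jb := Jq q (u yb - u (yb + z))
    set W : ℝ := (q - 1) * (H ^ (q - 2) * ‖z‖ ^ (κ * (q - 2))) * D ‖z‖ with hW_def
    have hJ' : Jb - Ja ≤ W := hJ
    have hW0 : 0 ≤ W := by
      rw [hW_def]
      have h1 : (0:ℝ) ≤ ‖z‖ ^ (κ * (q - 2)) := Real.rpow_nonneg (norm_nonneg z) _
      have h2 : (0:ℝ) ≤ H ^ (q - 2) := (Real.rpow_pos_of_pos hH _).le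
      exact mul_nonneg (mul_nonneg hq1.le (mul_nonneg h2 h1)) hD0
    have hpow0 : (0:ℝ) ≤ ‖z‖ ^ (-(n : ℝ) - t * q) := Real.rpow_nonneg (norm_nonneg z) _
    have hξz := hξb xb (by
      rw [mem_closedBall_zero_iff]; linarith) z
    have hξ0 : 0 ≤ ξ xb z := hξz.1
    have hξM : ξ xb z ≤ M := hξz.2
    have step1 : -(Φ ‖z‖) = -W * (M * ‖z‖ ^ (-(n : ℝ) - t * q)) := by
      rw [hΦ_def, hW_def, hc₄_def]; ring
    have step2 : -W * (M * ‖z‖ ^ (-(n : ℝ) - t * q))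
        ≤ -W * (ξ xb z * ‖z‖ ^ (-(n : ℝ) - t * q)) := by
      apply mul_le_mul_of_nonpos_left _ (neg_nonpos.2 hW0)
      exact mul_le_mul_of_nonneg_right hξM hpow0
    have step3 : -W * (ξ xb z * ‖z‖ ^ (-(n : ℝ) - t * q))
        ≤ (Ja - Jb) * (ξ xb z * ‖z‖ ^ (-(n : ℝ) - t * q)) := by
      apply mul_le_mul_of_nonneg_right _ (mul_nonneg hξ0 hpow0)
      linarith [hJ']
    have step4 : (Ja - Jb) * (ξ xb z * ‖z‖ ^ (-(n : ℝ) - t * q)) = F z := by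
      rw [hF_def]; ring
    linarith
  -- continuity and integrability of the radial bound
  have hDcont : Continuous D := by
    rw [hD_def]
    exact continuous_const.min (by fun_prop)
  have hΦcont : ContinuousOn Φ (Set.Ici aa) := by
    rw [hΦ_def]
    have h1 : ContinuousOn (fun r : ℝ => r ^ (κ * (q - 2))) (Set.Ici aa) :=
      ContinuousOn.rpow_const continuousOn_id
        (fun r hr => Or.inl (ne_of_gt (lt_of_lt_of_le haa0 hr)))
    have h2 : ContinuousOn (fun r : ℝ => r ^ (-(n:ℝ) - t * q)) (Set.Ici aa) :=
      ContinuousOn.rpow_const continuousOn_id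
        (fun r hr => Or.inl (ne_of_gt (lt_of_lt_of_le haa0 hr)))
    exact (continuousOn_const.mul (h1.mul h2)).mul hDcont.continuousOn
  have hGcont : ContinuousOn (fun z : EuclideanSpace ℝ (Fin n) => Φ ‖z‖)
      (closedBall (0 : EuclideanSpace ℝ (Fin n)) bb \ ball 0 aa) := by
    apply hΦcont.comp continuous_norm.continuousOn
    intro z hz
    simpa [mem_ball_zero_iff, not_lt] using hz.2
  have hGint : IntegrableOn (fun z : EuclideanSpace ℝ (Fin n) => Φ ‖z‖) S := by
    apply (hGcont.integrableOn_compact ((isCompact_closedBall _ _).diff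
      isOpen_ball)).mono_set
    rw [hS_def]
    exact Set.diff_subset_diff ball_subset_closedBall subset_rfl
  by_cases hFint : IntegrableOn F S volume
  swap
  · rw [MeasureTheory.integral_undef hFint]
    have hB : 0 ≤ T₁ + d ^ ν * T₂ + T₃ := by
      have := mul_nonneg hdν hT₂
      linarith
    have hC : (0:ℝ) ≤ C₁ + C₂ + C₃ + 1 := by linarith
    rw [neg_mul]
    exact neg_nonpos.2 (mul_nonneg hC hB)
  -- comparison
  have key1 : -(∫ z in S, Φ ‖z‖) ≤ ∫ z in S, F z := by
    rw [← MeasureTheory.integral_neg]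
    exact setIntegral_mono_on hGint.neg hFint hSmeas hpt
  -- polar coordinates
  have key2 : (∫ z in S, Φ ‖z‖) = cn * ∫ y in aa..bb, y ^ (n - 1) * Φ y := by
    rw [hS_def, hcn_def]
    exact annulus_radial_eq n hn Φ haa0 haabb
  -- interval integrability
  have hJcont : ContinuousOn (fun y : ℝ => y ^ (n - 1) * Φ y) (Set.Icc aa bb) :=
    (continuous_pow (n - 1)).continuousOn.mul (hΦcont.mono Set.Icc_subset_Ici_self)
  have hJint1 : IntervalIntegrable (fun y : ℝ => y ^ (n - 1) * Φ y) volume aa R := by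
    apply ContinuousOn.intervalIntegrable
    rw [Set.uIcc_of_le haaR.le]
    exact hJcont.mono (Set.Icc_subset_Icc le_rfl hRbb.le)
  have hJint2 : IntervalIntegrable (fun y : ℝ => y ^ (n - 1) * Φ y) volume R bb := by
    apply ContinuousOn.intervalIntegrable
    rw [Set.uIcc_of_le hRbb.le]
    exact hJcont.mono (Set.Icc_subset_Icc haaR.le le_rfl)
  have hsplit : (∫ y in aa..bb, y ^ (n - 1) * Φ y)
      = (∫ y in aa..R, y ^ (n - 1) * Φ y) + ∫ y in R..bb, y ^ (n - 1) * Φ y :=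
    (intervalIntegral.integral_add_adjacent_intervals hJint1 hJint2).symm
  have hyeq : ∀ y : ℝ, 0 < y → (y : ℝ) ^ (n - 1) * Φ y
      = c₄ * y ^ (κ * (q - 2) - t * q - 1) * D y := by
    intro y hy
    have h1 : (y : ℝ) ^ (n - 1) = y ^ ((n : ℝ) - 1) := by
      rw [← Real.rpow_natCast y (n - 1), Nat.cast_sub hn, Nat.cast_one]
    have h2 : y ^ ((n : ℝ) - 1) * (y ^ (κ * (q - 2)) * y ^ (-(n : ℝ) - t * q))
        = y ^ (κ * (q - 2) - t * q - 1) := by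
      rw [← Real.rpow_add hy, ← Real.rpow_add hy]
      congr 1; ring
    simp only [hΦ_def]
    calc (y : ℝ) ^ (n - 1) * (c₄ * (y ^ (κ * (q - 2)) * y ^ (-(n : ℝ) - t * q)) * D y)
        = (y ^ ((n : ℝ) - 1) * (y ^ (κ * (q - 2)) * y ^ (-(n : ℝ) - t * q)))
            * (c₄ * D y) := by rw [h1]; ring
      _ = y ^ (κ * (q - 2) - t * q - 1) * (c₄ * D y) := by rw [h2]
      _ = c₄ * y ^ (κ * (q - 2) - t * q - 1) * D y := by ring
  have hRle1 : R ≤ 1 := by linarith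
  -- inner bound
  have bound1 : (∫ y in aa..R, y ^ (n - 1) * Φ y)
      ≤ c₄ * (m₁ * Cm) * (A * T₂ + T₁) := by
    have hmono : ∀ y ∈ Set.Icc aa R, y ^ (n - 1) * Φ y
        ≤ c₄ * (m₁ * Cm) * (A * y ^ (κ * (q - 2) - t * q)
            + y ^ (κ * (q - 2) + 1 - t * q)) := by
      intro y hy
      have hy0 : 0 < y := lt_of_lt_of_le haa0 hy.1
      have hy1 : y ≤ 1 := le_trans hy.2 hRle1
      rw [hyeq y hy0]
      have hmin : D y ≤ m₁ * (Cm * (A * y + y ^ m)) := min_le_right _ _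
      have hcy : 0 ≤ c₄ * y ^ (κ * (q - 2) - t * q - 1) :=
        mul_nonneg hc₄.le (Real.rpow_nonneg hy0.le _)
      have hy_pow1 : y ^ (κ * (q - 2) - t * q - 1) * y = y ^ (κ * (q - 2) - t * q) := by
        rw [← Real.rpow_add_one hy0.ne']
        congr 1; ring
      have hy_powm : y ^ (κ * (q - 2) - t * q - 1) * y ^ m
          ≤ y ^ (κ * (q - 2) + 1 - t * q) := by
        rw [← Real.rpow_natCast y m, ← Real.rpow_add hy0]
        apply Real.rpow_le_rpow_of_exponent_ge hy0 hy1
        have hm3 : (3 : ℝ) ≤ (m : ℝ) := by exact_mod_cast hm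
        linarith
      calc c₄ * y ^ (κ * (q - 2) - t * q - 1) * D y
          ≤ c₄ * y ^ (κ * (q - 2) - t * q - 1) * (m₁ * (Cm * (A * y + y ^ m))) :=
            mul_le_mul_of_nonneg_left hmin hcy
        _ = c₄ * (m₁ * Cm) * (A * (y ^ (κ * (q - 2) - t * q - 1) * y)
              + y ^ (κ * (q - 2) - t * q - 1) * y ^ m) := by ring
        _ ≤ c₄ * (m₁ * Cm) * (A * y ^ (κ * (q - 2) - t * q)
              + y ^ (κ * (q - 2) + 1 - t * q)) := by
            rw [hy_pow1]
            apply mul_le_mul_of_nonneg_left _ (by positivity)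
            exact add_le_add le_rfl hy_powm
    have hint_f : IntervalIntegrable (fun y : ℝ => y ^ (κ * (q - 2) - t * q))
        volume aa R := by
      apply ContinuousOn.intervalIntegrable
      rw [Set.uIcc_of_le haaR.le]
      exact ContinuousOn.rpow_const continuousOn_id
        (fun r hr => Or.inl (ne_of_gt (lt_of_lt_of_le haa0 hr.1)))
    have hint_g : IntervalIntegrable (fun y : ℝ => y ^ (κ * (q - 2) + 1 - t * q))
        volume aa R := by
      apply ContinuousOn.intervalIntegrable
      rw [Set.uIcc_of_le haaR.le]
      exact ContinuousOn.rpow_const continuousOn_id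
        (fun r hr => Or.inl (ne_of_gt (lt_of_lt_of_le haa0 hr.1)))
    have hrhsint : IntervalIntegrable (fun y : ℝ => c₄ * (m₁ * Cm)
        * (A * y ^ (κ * (q - 2) - t * q) + y ^ (κ * (q - 2) + 1 - t * q)))
        volume aa R := ((hint_f.const_mul A).add hint_g).const_mul _
    have hle := intervalIntegral.integral_mono_on haaR.le hJint1 hrhsint hmono
    rwa [intervalIntegral.integral_const_mul,
      intervalIntegral.integral_add (hint_f.const_mul A) hint_g,
      intervalIntegral.integral_const_mul, ← hT₂_def, ← hT₁_def] at hle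
  -- outer bound
  have hfe : e ≤ κ * (q - 2) - t * q := by
    have h1 : κ * (p - 2) ≤ κ * (q - 2) := mul_le_mul_of_nonneg_left (by linarith) hκ0
    rw [he_def]; linarith
  have bound2 : (∫ y in R..bb, y ^ (n - 1) * Φ y)
      ≤ c₄ * (2 * H * d ^ κ) * (R ^ e / (-e)) := by
    have hmono : ∀ y ∈ Set.Icc R bb, y ^ (n - 1) * Φ y
        ≤ c₄ * (2 * H * d ^ κ) * y ^ (e - 1) := by
      intro y hy
      have hy0 : 0 < y := lt_of_lt_of_le hR0 hy.1
      have hy1 : y ≤ 1 := by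
        have := hy.2
        linarith
      rw [hyeq y hy0]
      have hmin : D y ≤ 2 * H * d ^ κ := min_le_left _ _
      have hcy : 0 ≤ c₄ * y ^ (κ * (q - 2) - t * q - 1) :=
        mul_nonneg hc₄.le (Real.rpow_nonneg hy0.le _)
      have hexp : y ^ (κ * (q - 2) - t * q - 1) ≤ y ^ (e - 1) :=
        Real.rpow_le_rpow_of_exponent_ge hy0 hy1 (by linarith)
      have hpos : (0:ℝ) ≤ c₄ * (2 * H * d ^ κ) := by positivity
      calc c₄ * y ^ (κ * (q - 2) - t * q - 1) * D y
          ≤ c₄ * y ^ (κ * (q - 2) - t * q - 1) * (2 * H * d ^ κ) :=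
            mul_le_mul_of_nonneg_left hmin hcy
        _ = c₄ * (2 * H * d ^ κ) * y ^ (κ * (q - 2) - t * q - 1) := by ring
        _ ≤ c₄ * (2 * H * d ^ κ) * y ^ (e - 1) :=
            mul_le_mul_of_nonneg_left hexp hpos
    have hint_h : IntervalIntegrable (fun y : ℝ => y ^ (e - 1)) volume R bb := by
      apply ContinuousOn.intervalIntegrable
      rw [Set.uIcc_of_le hRbb.le]
      exact ContinuousOn.rpow_const continuousOn_id
        (fun r hr => Or.inl (ne_of_gt (lt_of_lt_of_le hR0 hr.1)))
    have hle := intervalIntegral.integral_mono_on hRbb.le hJint2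
      (hint_h.const_mul _) hmono
    have heval : (∫ y in R..bb, c₄ * (2 * H * d ^ κ) * y ^ (e - 1))
        = c₄ * (2 * H * d ^ κ) * ((bb ^ e - R ^ e) / e) := by
      rw [intervalIntegral.integral_const_mul]
      congr 1
      have h0 : (0:ℝ) ∉ Set.uIcc R bb := Set.notMem_uIcc_of_lt hR0 hbb0
      rw [integral_rpow (Or.inr ⟨by linarith, h0⟩)]
      have he1 : e - 1 + 1 = e := by ring
      rw [he1]
    have hlast : (bb ^ e - R ^ e) / e ≤ R ^ e / (-e) := by
      have hbbe : 0 ≤ bb ^ e := Real.rpow_nonneg hbb0.le e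
      have h1 : (bb ^ e - R ^ e) / e = (R ^ e - bb ^ e) / (-e) := by
        rw [div_neg]; ring
      rw [h1]
      gcongr
      · linarith
      · linarith
    calc (∫ y in R..bb, y ^ (n - 1) * Φ y)
        ≤ ∫ y in R..bb, c₄ * (2 * H * d ^ κ) * y ^ (e - 1) := hle
      _ = c₄ * (2 * H * d ^ κ) * ((bb ^ e - R ^ e) / e) := heval
      _ ≤ c₄ * (2 * H * d ^ κ) * (R ^ e / (-e)) :=
          mul_le_mul_of_nonneg_left hlast (by positivity)
  -- bound on A
  have hAb : A ≤ CA * d ^ ν := by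
    have h1 : m₁ * g₀ ^ m ≤ H * d ^ κ := by
      have h2 := le_trans hii (le_trans (le_abs_self _) hdκ)
      have hpsix : psiFun n ρ₁ m xb = g₀ ^ m := by rw [hg₀_def]; rfl
      rwa [hpsix] at h2
    have hgm : g₀ ^ m ≤ H / m₁ * d ^ κ := by
      rw [div_mul_eq_mul_div, le_div_iff₀ hm₁]
      linarith [h1]
    have hc0 : 0 ≤ H / m₁ * d ^ κ := by positivity
    have hkey := pow_sub_one_le_rpow hg₀ hc0 (by omega : 1 ≤ m) hgm
    rw [hA_def]
    calc g₀ ^ (m - 1) ≤ (H / m₁ * d ^ κ) ^ (((m : ℝ) - 1) / (m : ℝ)) := hkey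
      _ = CA * (d ^ κ) ^ (((m : ℝ) - 1) / (m : ℝ)) := by
          rw [Real.mul_rpow (by positivity) (Real.rpow_nonneg hd.le κ), hCA_def]
      _ = CA * d ^ ν := by
          rw [← Real.rpow_mul hd.le]
          have hνe : κ * (((m : ℝ) - 1) / (m : ℝ)) = ν := by rw [hν_def]; ring
          rw [hνe]
  have hT3' : d ^ κ * R ^ e = T₃ := by
    rw [hT₃_def, hR_def, ← Real.rpow_mul hd.le, ← Real.rpow_add hd]
  have hAT₂ : A * T₂ ≤ CA * (d ^ ν * T₂) := by
    calc A * T₂ ≤ (CA * d ^ ν) * T₂ := mul_le_mul_of_nonneg_right hAb hT₂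
      _ = CA * (d ^ ν * T₂) := by ring
  have hsum_le : (∫ y in aa..bb, y ^ (n - 1) * Φ y)
      ≤ c₄ * (m₁ * Cm) * (A * T₂ + T₁) + c₄ * (2 * H * d ^ κ) * (R ^ e / (-e)) := by
    rw [hsplit]; exact add_le_add bound1 bound2
  have hG_le : (∫ z in S, Φ ‖z‖)
      ≤ C₁ * T₁ + C₂ * (d ^ ν * T₂) + C₃ * T₃ := by
    rw [key2]
    have h1 : cn * (c₄ * (m₁ * Cm) * (A * T₂ + T₁)
          + c₄ * (2 * H * d ^ κ) * (R ^ e / (-e)))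
        ≤ C₁ * T₁ + C₂ * (d ^ ν * T₂) + C₃ * T₃ := by
      have e1 : cn * (c₄ * (m₁ * Cm) * (A * T₂ + T₁)) = C₁ * (A * T₂) + C₁ * T₁ := by
        rw [hC₁_def]; ring
      have e2 : cn * (c₄ * (2 * H * d ^ κ) * (R ^ e / (-e))) = C₃ * (d ^ κ * R ^ e) := by
        rw [hC₃_def]; ring
      have e3 : C₁ * (A * T₂) ≤ C₂ * (d ^ ν * T₂) :=
        calc C₁ * (A * T₂) ≤ C₁ * (CA * (d ^ ν * T₂)) :=
              mul_le_mul_of_nonneg_left hAT₂ hC₁.le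
          _ = C₂ * (d ^ ν * T₂) := by rw [hC₂_def]; ring
      calc cn * (c₄ * (m₁ * Cm) * (A * T₂ + T₁)
            + c₄ * (2 * H * d ^ κ) * (R ^ e / (-e)))
          = C₁ * (A * T₂) + C₁ * T₁ + C₃ * (d ^ κ * R ^ e) := by rw [mul_add, e1, e2]
        _ = C₁ * (A * T₂) + C₁ * T₁ + C₃ * T₃ := by rw [hT3']
        _ ≤ C₂ * (d ^ ν * T₂) + C₁ * T₁ + C₃ * T₃ := by linarith
        _ = C₁ * T₁ + C₂ * (d ^ ν * T₂) + C₃ * T₃ := by ring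
    exact le_trans (mul_le_mul_of_nonneg_left hsum_le hcn.le) h1
  have p1 : 0 ≤ (C₂ + C₃ + 1) * T₁ := mul_nonneg (by linarith) hT₁
  have p2 : 0 ≤ (C₁ + C₃ + 1) * (d ^ ν * T₂) :=
    mul_nonneg (by linarith) (mul_nonneg hdν hT₂)
  have p3 : 0 ≤ (C₁ + C₂ + 1) * T₃ := mul_nonneg (by linarith) hT₃.le
  have expand : -(C₁ + C₂ + C₃ + 1) * (T₁ + d ^ ν * T₂ + T₃)
      = -(C₁ * T₁ + C₂ * (d ^ ν * T₂) + C₃ * T₃)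
        - ((C₂ + C₃ + 1) * T₁ + (C₁ + C₃ + 1) * (d ^ ν * T₂)
            + (C₁ + C₂ + 1) * T₃) := by ring
  rw [expand]
  linarith [key1, hG_le, p1, p2, p3]
end

section
/- Let n ≥ 1, 1 ≤ ρ₁ < ρ₂ ≤ 2, let m ≥ 3 be an integer, and let A, m₁, L > 0. Let u : ℝⁿ → ℝ be continuous on the closed ball B̄₂ with sup_{B̄₂}|u| ≤ A, let φ : [0, 4] → [0, ∞) be continuous and strictly increasing with φ(0) = 0, and set ψ(x) = ((|x|² − ρ₁²)₊)^m. Define Φ(x, y) = u(x) − u(y) − L φ(|x−y|) − m₁ ψ(x) for x, y ∈ B̄₂. Assume that m₁ ψ(x) > 2A whenever (ρ₂+ρ₁)/2 ≤ |x| ≤ 2, that L φ((ρ₂−ρ₁)/4) > 2A, and that sup_{B̄₂ × B̄₂} Φ > 0. Then there exist x̄ ∈ B_{(ρ₂+ρ₁)/2} and ȳ ∈ B_{(3ρ₂+ρ₁)/4} such that Φ(x̄, ȳ) = sup_{B̄₂ × B̄₂} Φ, x̄ ≠ ȳ, |x̄ − ȳ| < (ρ₂−ρ₁)/4, and L φ(|x̄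 − ȳ|) ≤ u(x̄) − u(ȳ) ≤ 2A. -/
open Metric MeasureTheory

set_option maxHeartbeats 1000000 in
theorem stmt_18 (n : ℕ) (hn : 1 ≤ n) (ρ₁ ρ₂ : ℝ) (hρ₁ : 1 ≤ ρ₁) (hρ : ρ₁ < ρ₂)
    (hρ₂ : ρ₂ ≤ 2) (m : ℕ) (hm : 3 ≤ m) (A m₁ L : ℝ)
    (hA : 0 < A) (hm₁ : 0 < m₁) (hL : 0 < L)
    (u : EuclideanSpace ℝ (Fin n) → ℝ)
    (hu : ContinuousOn u (closedBall (0 : EuclideanSpace ℝ (Fin n)) 2))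
    (hub : ∀ x ∈ closedBall (0 : EuclideanSpace ℝ (Fin n)) 2, |u x| ≤ A)
    (φ : ℝ → ℝ) (hφc : ContinuousOn φ (Set.Icc 0 4))
    (hφm : StrictMonoOn φ (Set.Icc 0 4)) (hφ0 : φ 0 = 0)
    (hφnn : ∀ r ∈ Set.Icc (0 : ℝ) 4, 0 ≤ φ r)
    (hψbig : ∀ x : EuclideanSpace ℝ (Fin n),
      (ρ₂ + ρ₁) / 2 ≤ ‖x‖ → ‖x‖ ≤ 2 → 2 * A < m₁ * psiFun n ρ₁ m x)
    (hLφ : 2 * A < L * φ ((ρ₂ - ρ₁) / 4))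
    (hsup : ∃ x ∈ closedBall (0 : EuclideanSpace ℝ (Fin n)) 2,
      ∃ y ∈ closedBall (0 : EuclideanSpace ℝ (Fin n)) 2,
        0 < u x - u y - L * φ ‖x - y‖ - m₁ * psiFun n ρ₁ m x) :
    ∃ xb ∈ ball (0 : EuclideanSpace ℝ (Fin n)) ((ρ₂ + ρ₁) / 2),
    ∃ yb ∈ ball (0 : EuclideanSpace ℝ (Fin n)) ((3 * ρ₂ + ρ₁) / 4),
      (∀ x ∈ closedBall (0 : EuclideanSpace ℝ (Fin n)) 2,
        ∀ y ∈ closedBall (0 : EuclideanSpace ℝ (Fin n)) 2,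
          u x - u y - L * φ ‖x - y‖ - m₁ * psiFun n ρ₁ m x
            ≤ u xb - u yb - L * φ ‖xb - yb‖ - m₁ * psiFun n ρ₁ m xb) ∧
      xb ≠ yb ∧ ‖xb - yb‖ < (ρ₂ - ρ₁) / 4 ∧
      L * φ ‖xb - yb‖ ≤ u xb - u yb ∧ u xb - u yb ≤ 2 * A := by

  classical
  set B := closedBall (0 : EuclideanSpace ℝ (Fin n)) 2 with hB
  set F : EuclideanSpace ℝ (Fin n) × EuclideanSpace ℝ (Fin n) → ℝ :=
    fun p => u p.1 - u p.2 - L * φ ‖p.1 - p.2‖ - m₁ * psiFun n ρ₁ m p.1 with hF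
  have hnorm : ∀ x ∈ B, ∀ y ∈ B, ‖x - y‖ ∈ Set.Icc (0:ℝ) 4 := by
    intro x hx y hy
    simp only [hB, mem_closedBall, dist_zero_right] at hx hy
    refine ⟨norm_nonneg _, ?_⟩
    calc ‖x - y‖ ≤ ‖x‖ + ‖y‖ := norm_sub_le _ _
      _ ≤ 4 := by linarith
  have hKc : IsCompact (B ×ˢ B) := (isCompact_closedBall _ _).prod (isCompact_closedBall _ _)
  obtain ⟨x₀, hx₀, y₀, hy₀, hpos⟩ := hsup
  have hne : (B ×ˢ B).Nonempty := ⟨(x₀, y₀), hx₀, hy₀⟩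
  have hψc : Continuous (psiFun n ρ₁ m) := by
    unfold psiFun
    exact (((continuous_norm.pow 2).sub continuous_const).max continuous_const).pow m
  have hψnn : ∀ x, 0 ≤ psiFun n ρ₁ m x := fun x => pow_nonneg (le_max_right _ _) m
  have hFc : ContinuousOn F (B ×ˢ B) := by
    apply ContinuousOn.sub
    apply ContinuousOn.sub
    apply ContinuousOn.sub
    · exact hu.comp continuous_fst.continuousOn (fun p hp => hp.1)
    · exact hu.comp continuous_snd.continuousOn (fun p hp => hp.2)
    · refine continuousOn_const.mul ?_
      refine hφc.comp ((continuous_fst.sub continuous_snd).norm.continuousOn) ?_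
      intro p hp; exact hnorm _ hp.1 _ hp.2
    · exact continuousOn_const.mul (hψc.comp continuous_fst).continuousOn
  obtain ⟨p, hpK, hmax0⟩ := hKc.exists_isMaxOn hne hFc
  have hmax : ∀ q ∈ B ×ˢ B, F q ≤ F p := isMaxOn_iff.mp hmax0
  obtain ⟨hp1, hp2⟩ := hpK
  have hFpos : 0 < F p := lt_of_lt_of_le hpos (hmax (x₀, y₀) ⟨hx₀, hy₀⟩)
  simp only [hF] at hFpos
  have hp1' : ‖p.1‖ ≤ 2 := by simpa [hB, dist_zero_right] using hp1
  have hp2' : ‖p.2‖ ≤ 2 := by simpa [hB, dist_zero_right] using hp2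
  have hφnn' : 0 ≤ φ ‖p.1 - p.2‖ := hφnn _ (hnorm _ hp1 _ hp2)
  have hub1 := abs_le.mp (hub _ hp1)
  have hub2 := abs_le.mp (hub _ hp2)
  have hdiff : u p.1 - u p.2 ≤ 2 * A := by linarith [hub1.2, hub2.1]
  have hψx : m₁ * psiFun n ρ₁ m p.1 ≤ 2 * A := by nlinarith [hψnn p.1]
  have hx_ball : ‖p.1‖ < (ρ₂ + ρ₁) / 2 := by
    by_contra h
    push_neg at h
    have := hψbig p.1 h hp1'
    linarith
  have hLφ' : L * φ ‖p.1 - p.2‖ < L * φ ((ρ₂ - ρ₁) / 4) := by nlinarith [hψnn p.1]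
  have hφlt : φ ‖p.1 - p.2‖ < φ ((ρ₂ - ρ₁) / 4) := lt_of_mul_lt_mul_left hLφ' hL.le
  have hcI : (ρ₂ - ρ₁) / 4 ∈ Set.Icc (0:ℝ) 4 := by constructor <;> [linarith; linarith]
  have hdist : ‖p.1 - p.2‖ < (ρ₂ - ρ₁) / 4 := by
    by_contra h
    push_neg at h
    have := hφm.monotoneOn hcI (hnorm _ hp1 _ hp2) h
    linarith
  have hy_ball : ‖p.2‖ < (3 * ρ₂ + ρ₁) / 4 := by
    have h1 : ‖p.2‖ ≤ ‖p.1‖ + ‖p.1 - p.2‖ := by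
      calc ‖p.2‖ = ‖p.1 - (p.1 - p.2)‖ := by rw [sub_sub_cancel]
        _ ≤ ‖p.1‖ + ‖p.1 - p.2‖ := norm_sub_le _ _
    linarith
  have hLle : L * φ ‖p.1 - p.2‖ ≤ u p.1 - u p.2 := by nlinarith [hψnn p.1]
  have hne' : p.1 ≠ p.2 := by
    intro h
    rw [h] at hFpos
    simp [hφ0] at hFpos
    nlinarith [hψnn p.2]
  refine ⟨p.1, ?_, p.2, ?_, ?_, hne', hdist, hLle, hdiff⟩
  · simpa [mem_ball, dist_zero_right] using hx_ball
  · simpa [mem_ball, dist_zero_right] using hy_ball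
  · intro x hx y hy
    exact hmax _ (Set.mk_mem_prod hx hy)
end

section
/- Let n ≥ 1, q > 2, t ∈ (0,1), r ∈ (0,1], and let y ∈ ℝⁿ with |y| ≤ 2. Let u : ℝⁿ → ℝ be measurable and set Λ = ∫_{ℝⁿ} (1+|u(z)|)^{q−1} (1+|z|)^{−n−tq} dz, assumed finite. Then there exists a constant C, depending only on n, q, t and r, such that ∫_{|z−y| ≥ r} (1+|u(z)|)^{q−2} |z−y|^{−n−tq} dz ≤ C Λ^{(q−2)/(q−1)}. -/
open MeasureTheory
open scoped ENNReal

set_option maxHeartbeats 1000000 in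
theorem stmt_19 (n : ℕ) (hn : 1 ≤ n) (q t r : ℝ) (hq : 2 < q)
    (ht0 : 0 < t) (ht1 : t < 1) (hr0 : 0 < r) (hr1 : r ≤ 1) :
    ∃ C : ℝ, 0 < C ∧
      ∀ y : EuclideanSpace ℝ (Fin n), ‖y‖ ≤ 2 →
      ∀ u : EuclideanSpace ℝ (Fin n) → ℝ, Measurable u →
        Integrable (fun z : EuclideanSpace ℝ (Fin n) =>
          (1 + |u z|) ^ (q - 1) * (1 + ‖z‖) ^ (-(n : ℝ) - t * q)) →
        (∫ z in {z : EuclideanSpace ℝ (Fin n) | r ≤ ‖z - y‖},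
            (1 + |u z|) ^ (q - 2) * ‖z - y‖ ^ (-(n : ℝ) - t * q))
          ≤ C * (∫ z : EuclideanSpace ℝ (Fin n),
              (1 + |u z|) ^ (q - 1) * (1 + ‖z‖) ^ (-(n : ℝ) - t * q))
                ^ ((q - 2) / (q - 1)) := by
  classical
  set E := EuclideanSpace ℝ (Fin n) with hE
  set α : ℝ := (n : ℝ) + t * q with hα_def
  have hexp : -(n : ℝ) - t * q = -α := by rw [hα_def]; ring
  have hq1 : (0 : ℝ) < q - 1 := by linarith
  have hq2 : (0 : ℝ) < q - 2 := by linarith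
  have hnpos : (0 : ℝ) < n := by exact_mod_cast Nat.lt_of_lt_of_le Nat.zero_lt_one hn
  have hnα : (n : ℝ) < α := by nlinarith
  have hαpos : (0 : ℝ) < α := lt_trans hnpos hnα
  set θ : ℝ := (q - 2) / (q - 1) with hθ_def
  have hθpos : 0 < θ := div_pos hq2 hq1
  set a : ℝ := α * θ with ha_def
  have haq : a * (q - 1) = α * (q - 2) := by
    rw [ha_def, hθ_def]; field_simp
  have hapos : 0 < a := mul_pos hαpos hθpos
  have hmulθ : (q - 1) * θ = q - 2 := by rw [hθ_def]; field_simp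
  have hθp : θ * ((q - 1) / (q - 2)) = 1 := by rw [hθ_def]; field_simp
  -- conjugate exponents
  have hconj : Real.HolderConjugate ((q - 1) / (q - 2)) (q - 1) := by
    rw [Real.holderConjugate_iff]
    constructor
    · rw [lt_div_iff₀ hq2]; linarith
    · rw [inv_div]; field_simp; ring
  have hSmeas : ∀ y : E, MeasurableSet {z : E | r ≤ ‖z - y‖} := by
    intro y
    have : Measurable fun z : E => ‖z - y‖ := by fun_prop
    exact measurableSet_le measurable_const this
  have hmeas0 : MeasurableSet {w : E | r ≤ ‖w‖} :=
    measurableSet_le measurable_const (by fun_prop)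
  -- the fixed integral I is finite
  set I : ℝ≥0∞ := ∫⁻ w in {w : E | r ≤ ‖w‖}, ENNReal.ofReal (‖w‖ ^ (-α)) with hI_def
  have hIfin : I < ⊤ := by
    have hfr : ((Module.finrank ℝ E : ℝ)) < α := by
      have h : Module.finrank ℝ E = n := finrank_euclideanSpace_fin
      rw [h]; exact hnα
    have hint : Integrable (fun w : E => (1 + 1/r) ^ α * (1 + ‖w‖) ^ (-α)) :=
      Integrable.const_mul (integrable_one_add_norm hfr) _
    calc I ≤ ∫⁻ w in {w : E | r ≤ ‖w‖},
          ENNReal.ofReal ((1 + 1/r) ^ α * (1 + ‖w‖) ^ (-α)) := by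
          apply setLIntegral_mono' hmeas0
          intro w hw
          simp only [Set.mem_setOf_eq] at hw
          have hw0 : 0 < ‖w‖ := lt_of_lt_of_le hr0 hw
          apply ENNReal.ofReal_le_ofReal
          have h1 : (1 + ‖w‖) ≤ (1 + 1/r) * ‖w‖ := by
            have h' : (1:ℝ) ≤ (1/r) * ‖w‖ := by
              rw [one_div, inv_mul_eq_div, le_div_iff₀ hr0]; linarith
            nlinarith
          have h2 : (1 + ‖w‖) ^ α ≤ ((1 + 1/r) * ‖w‖) ^ α :=
            Real.rpow_le_rpow (by positivity) h1 hαpos.le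
          rw [Real.mul_rpow (by positivity) (norm_nonneg w)] at h2
          have hA : (0:ℝ) < ‖w‖ ^ α := Real.rpow_pos_of_pos hw0 α
          have hB : (0:ℝ) < (1 + ‖w‖) ^ α := Real.rpow_pos_of_pos (by positivity) α
          rw [Real.rpow_neg (norm_nonneg w), Real.rpow_neg (by positivity),
            inv_eq_one_div, inv_eq_one_div, mul_one_div, div_le_div_iff₀ hA hB]
          nlinarith
      _ < ⊤ := by
          calc (∫⁻ w in {w : E | r ≤ ‖w‖},
              ENNReal.ofReal ((1 + 1/r) ^ α * (1 + ‖w‖) ^ (-α)))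
              ≤ ∫⁻ w, ENNReal.ofReal ((1 + 1/r) ^ α * (1 + ‖w‖) ^ (-α)) :=
              setLIntegral_le_lintegral _ _
          _ < ⊤ := hint.lintegral_lt_top
  set Kb : ℝ≥0∞ := ENNReal.ofReal ((1 + 3/r) ^ (α * (q - 2))) * I with hKb_def
  have hKbfin : Kb < ⊤ := ENNReal.mul_lt_top ENNReal.ofReal_lt_top hIfin
  refine ⟨max 1 (Kb.toReal ^ (1/(q-1))), lt_of_lt_of_le zero_lt_one (le_max_left _ _),
    fun y hy u hu hint => ?_⟩
  simp only [hexp]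
  set S : Set E := {z : E | r ≤ ‖z - y‖} with hS_def
  set g : E → ℝ := fun z => (1 + |u z|) ^ (q - 1) * (1 + ‖z‖) ^ (-α) with hg_def
  set f : E → ℝ := fun z => (1 + |u z|) ^ (q - 2) * ‖z - y‖ ^ (-α) with hf_def
  have hgmeas : Measurable g := by rw [hg_def]; fun_prop
  have hfmeas : Measurable f := by rw [hf_def]; fun_prop
  have hgnn : ∀ z, 0 ≤ g z := fun z => by rw [hg_def]; positivity
  have hfnn : ∀ z, 0 ≤ f z := fun z => by rw [hf_def]; positivity
  have hint' : Integrable g := by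
    have h := hint
    simp only [hexp] at h
    exact h
  set Λe : ℝ≥0∞ := ∫⁻ z, ENNReal.ofReal (g z) with hΛe_def
  have hΛefin : Λe < ⊤ := hint'.lintegral_lt_top
  have hΛ : (∫ z, g z) = Λe.toReal :=
    integral_eq_lintegral_of_nonneg_ae (Filter.Eventually.of_forall hgnn)
      hgmeas.aestronglyMeasurable
  have hΛnn : 0 ≤ ∫ z, g z := integral_nonneg hgnn
  have hLHS : (∫ z in S, f z) = (∫⁻ z in S, ENNReal.ofReal (f z)).toReal :=
    integral_eq_lintegral_of_nonneg_ae (Filter.Eventually.of_forall hfnn)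
      hfmeas.aestronglyMeasurable.restrict
  -- pointwise factorization on S
  have hfact : ∀ z ∈ S, ENNReal.ofReal (f z) = (ENNReal.ofReal (g z)) ^ θ *
      ENNReal.ofReal ((1 + ‖z‖) ^ a * ‖z - y‖ ^ (-α)) := by
    intro z hz
    have hzS : r ≤ ‖z - y‖ := hz
    have hb : (0:ℝ) < ‖z - y‖ := lt_of_lt_of_le hr0 hzS
    have hgθ : g z ^ θ = (1 + |u z|) ^ (q - 2) * (1 + ‖z‖) ^ (-α * θ) := by
      rw [hg_def]
      rw [Real.mul_rpow (by positivity) (by positivity),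
        ← Real.rpow_mul (by positivity), ← Real.rpow_mul (by positivity), hmulθ]
    have h1 : (1 + ‖z‖) ^ (-α * θ) * (1 + ‖z‖) ^ a = 1 := by
      rw [← Real.rpow_add (by positivity), ha_def, neg_mul, neg_add_cancel, Real.rpow_zero]
    have hfeq : g z ^ θ * ((1 + ‖z‖) ^ a * ‖z - y‖ ^ (-α)) = f z := by
      rw [hgθ, hf_def]
      calc (1 + |u z|) ^ (q - 2) * (1 + ‖z‖) ^ (-α * θ) *
            ((1 + ‖z‖) ^ a * ‖z - y‖ ^ (-α))
          = (1 + |u z|) ^ (q - 2) *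
            (((1 + ‖z‖) ^ (-α * θ) * (1 + ‖z‖) ^ a) * ‖z - y‖ ^ (-α)) := by ring
        _ = (1 + |u z|) ^ (q - 2) * ‖z - y‖ ^ (-α) := by rw [h1, one_mul]
    rw [← hfeq, ENNReal.ofReal_mul (Real.rpow_nonneg (hgnn z) θ),
      ← ENNReal.ofReal_rpow_of_nonneg (hgnn z) hθpos.le]
  -- the translated integral
  have htrans : (∫⁻ z in S, ENNReal.ofReal (‖z - y‖ ^ (-α))) = I := by
    set φ : E → ℝ≥0∞ :=
      Set.indicator {w : E | r ≤ ‖w‖} (fun w => ENNReal.ofReal (‖w‖ ^ (-α))) with hφ_def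
    have hφmeas : Measurable φ := by
      apply Measurable.indicator _ hmeas0
      apply Measurable.ennreal_ofReal
      fun_prop
    have hind : ∀ z : E,
        Set.indicator S (fun z => ENNReal.ofReal (‖z - y‖ ^ (-α))) z = φ (z - y) := by
      intro z
      by_cases hz : r ≤ ‖z - y‖ <;>
        simp [hφ_def, Set.indicator_apply, hS_def, Set.mem_setOf_eq, hz]
    rw [← lintegral_indicator (hSmeas y)]
    calc (∫⁻ z, Set.indicator S (fun z => ENNReal.ofReal (‖z - y‖ ^ (-α))) z)
        = ∫⁻ z, φ (z - y) := by exact lintegral_congr hind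
      _ = ∫⁻ w, φ w := (measurePreserving_sub_right volume y).lintegral_comp hφmeas
      _ = I := by rw [hφ_def, lintegral_indicator hmeas0]
  -- bound on the second factor
  have hHbound : (∫⁻ z in S, (ENNReal.ofReal ((1 + ‖z‖) ^ a * ‖z - y‖ ^ (-α))) ^ (q - 1))
      ≤ Kb := by
    have hpt : ∀ z ∈ S, (ENNReal.ofReal ((1 + ‖z‖) ^ a * ‖z - y‖ ^ (-α))) ^ (q - 1) ≤
        ENNReal.ofReal ((1 + 3/r) ^ (α * (q - 2))) * ENNReal.ofReal (‖z - y‖ ^ (-α)) := by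
      intro z hz
      have hzS : r ≤ ‖z - y‖ := hz
      have hb : (0:ℝ) < ‖z - y‖ := lt_of_lt_of_le hr0 hzS
      rw [ENNReal.ofReal_rpow_of_nonneg (by positivity) hq1.le,
        ← ENNReal.ofReal_mul (by positivity)]
      apply ENNReal.ofReal_le_ofReal
      rw [Real.mul_rpow (by positivity) (by positivity),
        ← Real.rpow_mul (by positivity), ← Real.rpow_mul (by positivity), haq]
      have h1 : (1 + ‖z‖) ≤ (1 + 3/r) * ‖z - y‖ := by
        have h2 : ‖z‖ ≤ ‖y‖ + ‖z - y‖ := by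
          calc ‖z‖ = ‖y + (z - y)‖ := by rw [show y + (z - y) = z from by abel]
          _ ≤ ‖y‖ + ‖z - y‖ := norm_add_le _ _
        have h3 : (3:ℝ) ≤ (3/r) * ‖z - y‖ := by
          rw [div_mul_eq_mul_div, le_div_iff₀ hr0]; linarith
        nlinarith [hy]
      have h4 : (1 + ‖z‖) ^ (α * (q-2)) ≤ ((1 + 3/r) * ‖z - y‖) ^ (α * (q-2)) :=
        Real.rpow_le_rpow (by positivity) h1 (le_of_lt (mul_pos hαpos hq2))
      rw [Real.mul_rpow (by positivity) hb.le] at h4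
      have h5 : ‖z - y‖ ^ (α * (q-2)) * ‖z - y‖ ^ (-α * (q-1)) = ‖z - y‖ ^ (-α) := by
        rw [← Real.rpow_add hb]; congr 1; ring
      calc (1 + ‖z‖) ^ (α * (q-2)) * ‖z - y‖ ^ (-α * (q-1))
          ≤ (1 + 3/r) ^ (α * (q-2)) * ‖z - y‖ ^ (α * (q-2)) * ‖z - y‖ ^ (-α * (q-1)) := by
            have hpos : (0:ℝ) < ‖z - y‖ ^ (-α * (q-1)) := Real.rpow_pos_of_pos hb _
            nlinarith
        _ = (1 + 3/r) ^ (α * (q-2)) * ‖z - y‖ ^ (-α) := by rw [mul_assoc, h5]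
    calc (∫⁻ z in S, (ENNReal.ofReal ((1 + ‖z‖) ^ a * ‖z - y‖ ^ (-α))) ^ (q - 1))
        ≤ ∫⁻ z in S, ENNReal.ofReal ((1 + 3/r) ^ (α * (q - 2))) *
            ENNReal.ofReal (‖z - y‖ ^ (-α)) := setLIntegral_mono' (hSmeas y) hpt
      _ = ENNReal.ofReal ((1 + 3/r) ^ (α * (q - 2))) *
            ∫⁻ z in S, ENNReal.ofReal (‖z - y‖ ^ (-α)) := by
            rw [lintegral_const_mul]
            apply Measurable.ennreal_ofReal
            fun_prop
      _ = Kb := by rw [htrans, hKb_def]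
  -- Hölder
  have key : (∫⁻ z in S, ENNReal.ofReal (f z)) ≤ Λe ^ θ * Kb ^ (1/(q-1)) := by
    have h1 : (∫⁻ z in S, ENNReal.ofReal (f z)) =
        ∫⁻ z in S, ((fun z => (ENNReal.ofReal (g z)) ^ θ) *
          (fun z => ENNReal.ofReal ((1 + ‖z‖) ^ a * ‖z - y‖ ^ (-α)))) z := by
      apply setLIntegral_congr_fun (hSmeas y)
      exact (fun z hz => by simpa using hfact z hz)
    rw [h1]
    calc (∫⁻ z in S, ((fun z => (ENNReal.ofReal (g z)) ^ θ) *
          (fun z => ENNReal.ofReal ((1 + ‖z‖) ^ a * ‖z - y‖ ^ (-α)))) z)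
        ≤ (∫⁻ z in S, ((ENNReal.ofReal (g z)) ^ θ) ^ ((q-1)/(q-2))) ^ (1/((q-1)/(q-2))) *
            (∫⁻ z in S, (ENNReal.ofReal ((1 + ‖z‖) ^ a * ‖z - y‖ ^ (-α))) ^ (q-1))
              ^ (1/(q-1)) := by
          apply ENNReal.lintegral_mul_le_Lp_mul_Lq _ hconj
          · apply Measurable.aemeasurable; fun_prop
          · apply Measurable.aemeasurable
            apply Measurable.ennreal_ofReal
            fun_prop
      _ = (∫⁻ z in S, ENNReal.ofReal (g z)) ^ θ *
            (∫⁻ z in S, (ENNReal.ofReal ((1 + ‖z‖) ^ a * ‖z - y‖ ^ (-α))) ^ (q-1))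
              ^ (1/(q-1)) := by
          congr 1
          congr 1
          · apply lintegral_congr
            intro z
            rw [← ENNReal.rpow_mul, hθp, ENNReal.rpow_one]
          · rw [one_div_div, ← hθ_def]
      _ ≤ Λe ^ θ * Kb ^ (1/(q-1)) :=
          mul_le_mul' (ENNReal.rpow_le_rpow (setLIntegral_le_lintegral _ _) hθpos.le)
            (ENNReal.rpow_le_rpow hHbound (one_div_nonneg.2 hq1.le))
  -- conclude
  calc (∫ z in S, f z) = (∫⁻ z in S, ENNReal.ofReal (f z)).toReal := hLHS
    _ ≤ (Λe ^ θ * Kb ^ (1/(q-1))).toReal := by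
        apply ENNReal.toReal_mono _ key
        exact ENNReal.mul_ne_top (ENNReal.rpow_ne_top_of_nonneg hθpos.le hΛefin.ne)
          (ENNReal.rpow_ne_top_of_nonneg (one_div_nonneg.2 hq1.le) hKbfin.ne)
    _ = Kb.toReal ^ (1/(q-1)) * (∫ z, g z) ^ θ := by
        rw [ENNReal.toReal_mul, ← ENNReal.toReal_rpow, ← ENNReal.toReal_rpow, hΛ]; ring
    _ ≤ max 1 (Kb.toReal ^ (1/(q-1))) * (∫ z, g z) ^ θ :=
        mul_le_mul_of_nonneg_right (le_max_right _ _) (Real.rpow_nonneg hΛnn θ)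
end
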